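/- arXiv:2401.15154 — 8 statements merged into one kernel-verified Lean document; each statement's English description precedes it below -/
import Mathlib

section
/- Let M, N be positive integers, let M_s, N_s be integers with S a subset of {1,...,M} of size M_s and T a subset of {1,...,N} of size N_s, and suppose 2N_s ≠ N. Let L > 0 be a real number and let α_1,...,α_M and θ_1,...,θ_N be real phases. Define RIS phases φ_n = θ_n for n ∈ T and φ_n = θ_n + π otherwise, the cascaded channel h ∈ ℂ^M by h_m = √L · e^{iα_m} · Σ_{n=1}^N e^{i(φ_n − θ_n)}, and the beamformer w ∈ ℂ^M by w_m = (h_m / ‖h‖) · a_m where a_m = 1 if m ∈ S and a_m = −1 otherwise (‖h‖ is the Euclidean norm of h, which is nonzero). Then |Σ_{m=1}^M conj(h_m) · w_m|² = L · (2M_s − M)² · (2N_s − N)² / M. -/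
/-!
Every reflection term `exp (i (φₙ - θₙ))` is `1` on `T` and `-1` off it, so the cascaded channel
has the constant modulus `|hₘ|² = L (2Nₛ - N)²`. For a normalized matched filter with signs `aₘ`,
`conj hₘ · wₘ = |hₘ|² aₘ / ‖h‖`, so the received amplitude is `P (2Mₛ - M) / √(M P)` with
`P = L (2Nₛ - N)²`, whose square is `P (2Mₛ - M)² / M`.
-/
open Finset Complex Real ComplexConjugate

theorem Finset.sum_ite_mem_one_neg_one {ι R : Type*} [DecidableEq ι] [Ring R] {s S : Finset ι}
    (hS : S ⊆ s) : ∑ i ∈ s, (if i ∈ S then (1 : R) else -1) = 2 * #S - #s := by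
  have hsplit : ∀ i, (if i ∈ S then (1 : R) else -1) = 2 * (if i ∈ S then 1 else 0) - 1 := by
    intro i; split_ifs <;> norm_num
  simp only [hsplit, sum_sub_distrib, ← mul_sum, sum_boole, filter_mem_eq_inter,
    inter_eq_right.mpr hS, sum_const, nsmul_eq_mul, mul_one]

theorem Complex.exp_I_mul_ite_add_pi_sub (p : Prop) [Decidable p] (θ : ℝ) :
    cexp (I * (((if p then θ else θ + π) - θ : ℝ) : ℂ)) = if p then 1 else -1 := by
  split_ifs <;> simp [mul_comm I, exp_pi_mul_I]

theorem Complex.norm_ofReal_sq (x : ℝ) : ‖(x : ℂ)‖ ^ 2 = x ^ 2 := by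
  rw [norm_real, norm_eq_abs, sq_abs]

theorem Complex.norm_sq_sqrt_mul_exp_mul {L : ℝ} (hL : 0 ≤ L) (x : ℝ) (z : ℂ) :
    ‖(√L : ℂ) * cexp (I * x) * z‖ ^ 2 = L * ‖z‖ ^ 2 := by
  rw [norm_mul, norm_mul, mul_comm I, norm_exp_ofReal_mul_I, norm_real, norm_eq_abs,
    abs_of_nonneg (sqrt_nonneg L), mul_one, mul_pow, sq_sqrt hL]

theorem sq_div_mul_self {K : Type*} [Field K] (x n : K) : x ^ 2 / (n * x) = x / n := by
  rcases eq_or_ne x 0 with rfl | hx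
  · simp
  · field_simp

theorem norm_sq_sum_conj_mul_normalized_mul {ι : Type*} (s : Finset ι) (h a : ι → ℂ) {P : ℝ}
    (hP : ∀ m ∈ s, ‖h m‖ ^ 2 = P) :
    ‖∑ m ∈ s, conj (h m) * (h m / (√(∑ m ∈ s, ‖h m‖ ^ 2) : ℂ) * a m)‖ ^ 2
      = P * ‖∑ m ∈ s, a m‖ ^ 2 / #s := by
  have hnorm_sq : √(∑ m ∈ s, ‖h m‖ ^ 2) ^ 2 = #s * P := by
    rw [sq_sqrt (by positivity), sum_congr rfl hP, sum_const, nsmul_eq_mul]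
  have hterm : ∀ m ∈ s, conj (h m) * (h m / (√(∑ m ∈ s, ‖h m‖ ^ 2) : ℂ) * a m)
      = ((P / √(∑ m ∈ s, ‖h m‖ ^ 2) : ℝ) : ℂ) * a m := by
    intro m hm
    rw [← mul_assoc, mul_div_assoc', conj_mul', ← ofReal_pow, hP m hm]
    push_cast; ring
  rw [sum_congr rfl hterm, ← mul_sum, norm_mul, norm_real, norm_eq_abs, mul_pow, sq_abs, div_pow,
    hnorm_sq, sq_div_mul_self]
  ring

theorem stmt_0_general (M N : ℕ)
    (Ms Ns : ℕ) (S T : Finset ℕ)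
    (hS : S ⊆ Finset.Icc 1 M) (hScard : S.card = Ms)
    (hT : T ⊆ Finset.Icc 1 N) (hTcard : T.card = Ns)
    (L : ℝ) (hL : 0 < L)
    (α θ : ℕ → ℝ) :
    let φ : ℕ → ℝ := fun n => if n ∈ T then θ n else θ n + Real.pi
    let h : ℕ → ℂ := fun m => (Real.sqrt L : ℂ) * Complex.exp (Complex.I * (α m)) *
        ∑ n ∈ Finset.Icc 1 N, Complex.exp (Complex.I * ((φ n - θ n : ℝ) : ℂ))
    let hnorm : ℝ := Real.sqrt (∑ m ∈ Finset.Icc 1 M, ‖h m‖ ^ 2)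
    let a : ℕ → ℂ := fun m => if m ∈ S then 1 else -1
    let w : ℕ → ℂ := fun m => (h m / (hnorm : ℂ)) * a m
    ‖∑ m ∈ Finset.Icc 1 M, (starRingEnd ℂ) (h m) * w m‖ ^ 2
      = L * (2 * (Ms : ℝ) - M) ^ 2 * (2 * (Ns : ℝ) - N) ^ 2 / M := by
  intro φ h hnorm a w
  have hcascade : ∑ n ∈ Icc 1 N, cexp (I * ((φ n - θ n : ℝ) : ℂ)) = ((2 * Ns - N : ℝ) : ℂ) := by
    simp only [φ, exp_I_mul_ite_add_pi_sub, sum_ite_mem_one_neg_one hT, hTcard, Nat.card_Icc,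
      add_tsub_cancel_right]
    push_cast; ring
  have hgain : ∀ m ∈ Icc 1 M, ‖h m‖ ^ 2 = L * (2 * Ns - N) ^ 2 := fun m _ => by
    simp only [h]
    rw [hcascade, norm_sq_sqrt_mul_exp_mul hL.le, norm_ofReal_sq]
  have hsigns : ∑ m ∈ Icc 1 M, a m = ((2 * Ms - M : ℝ) : ℂ) := by
    simp only [a, sum_ite_mem_one_neg_one hS, hScard, Nat.card_Icc, add_tsub_cancel_right]
    push_cast; ring
  rw [norm_sq_sum_conj_mul_normalized_mul _ h a hgain, hsigns, norm_ofReal_sq,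
    Nat.card_Icc, add_tsub_cancel_right]
  ring

/-- Lemma 1 (received SNR at Bob with RIBES): the received signal power equals
`L · (2Mₛ − M)² · (2Nₛ − N)² / M`. -/
theorem stmt_0 (M N : ℕ) (hM : 0 < M) (hN : 0 < N)
    (Ms Ns : ℕ) (S T : Finset ℕ)
    (hS : S ⊆ Finset.Icc 1 M) (hScard : S.card = Ms)
    (hT : T ⊆ Finset.Icc 1 N) (hTcard : T.card = Ns)
    (hNs : 2 * Ns ≠ N)
    (L : ℝ) (hL : 0 < L)
    (α θ : ℕ → ℝ) :
    let φ : ℕ → ℝ := fun n => if n ∈ T then θ n else θ n + Real.pi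
    let h : ℕ → ℂ := fun m => (Real.sqrt L : ℂ) * Complex.exp (Complex.I * (α m)) *
        ∑ n ∈ Finset.Icc 1 N, Complex.exp (Complex.I * ((φ n - θ n : ℝ) : ℂ))
    let hnorm : ℝ := Real.sqrt (∑ m ∈ Finset.Icc 1 M, ‖h m‖ ^ 2)
    let a : ℕ → ℂ := fun m => if m ∈ S then 1 else -1
    let w : ℕ → ℂ := fun m => (h m / (hnorm : ℂ)) * a m
    ‖∑ m ∈ Finset.Icc 1 M, (starRingEnd ℂ) (h m) * w m‖ ^ 2
      = L * (2 * (Ms : ℝ) - M) ^ 2 * (2 * (Ns : ℝ) - N) ^ 2 / M :=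
  stmt_0_general M N Ms Ns S T hS hScard hT hTcard L hL α θ
end

section
/- Let M ≥ 2 be an integer, M_s an integer with 0 ≤ M_s ≤ M, and x a real number with sin(x/2) ≠ 0; set D = sin(M·x/2)/sin(x/2). For a subset S of {1,...,M} define u(S) = 2·Σ_{m∈S} z_m − Σ_{m=1}^M z_m with z_m = exp(i·x·(m − (M+1)/2)). Then the variance of u under the uniform distribution on size-M_s subsets, i.e. (1/binom(M,M_s))·Σ_{|S|=M_s} |u(S)|² − |(1/binom(M,M_s))·Σ_{|S|=M_s} u(S)|², equals 4·(M_s(M−M_s)/(M(M−1)))·(M − D²/M). -/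
/-!
Write `s(S) = ∑ m ∈ S, z m`, so that `u(S) = 2 • s(S) - D` and the variance of `u` is four times
that of `s`. For uniformly random `k`-subsets of an `n`-set, a fixed index is covered with
probability `k / n` and a fixed pair of distinct indices with probability `k(k-1) / (n(n-1))`;
expanding `‖s(S)‖²` over pairs then gives the sampling-without-replacement formula
`Var s = k(n-k) / (n(n-1)) · (∑ ‖z m‖² - ‖∑ z m‖² / n)`. Finally `‖z m‖ = 1`, and `∑ z m = D`
because `2i sin(x/2) · z m` telescopes.
-/

open Finset Complex Real

namespace Finset

variable {α : Type*} [DecidableEq α]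

theorem card_filter_powersetCard_subset_mul_choose {s t : Finset α} (hst : s ⊆ t) (n : ℕ) :
    #{S ∈ t.powersetCard n | s ⊆ S} * (#t).choose #s = (#t).choose n * n.choose #s := by
  by_cases hsn : #s ≤ n
  · rw [card_filter_powersetCard_subset s t n hst hsn, mul_comm, Nat.choose_mul hsn]
  · rw [Nat.choose_eq_zero_of_lt (not_le.1 hsn), mul_zero, mul_eq_zero, card_eq_zero,
      filter_eq_empty_iff]
    refine Or.inl fun S hS hsS => hsn ?_
    exact (mem_powersetCard.1 hS).2 ▸ card_le_card hsS

theorem cast_card_filter_mem_powersetCard {A : Finset α} {a : α} (ha : a ∈ A) (k : ℕ) :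
    (#{S ∈ A.powersetCard k | a ∈ S} : ℝ) = (#A).choose k * k / #A := by
  have h := card_filter_powersetCard_subset_mul_choose (singleton_subset_iff.2 ha) k
  simp only [singleton_subset_iff, card_singleton, Nat.choose_one_right] at h
  have hA : (#A : ℝ) ≠ 0 := by exact_mod_cast (card_pos.2 ⟨a, ha⟩).ne'
  rw [eq_div_iff hA]
  exact_mod_cast h

theorem cast_card_filter_mem_mem_powersetCard {A : Finset α} {a b : α} (ha : a ∈ A) (hb : b ∈ A)
    (hab : a ≠ b) (k : ℕ) :
    (#{S ∈ A.powersetCard k | a ∈ S ∧ b ∈ S} : ℝ)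
      = (#A).choose k * (k * (k - 1)) / (#A * (#A - 1)) := by
  have hab_sub : {a, b} ⊆ A := insert_subset ha (singleton_subset_iff.2 hb)
  have h := card_filter_powersetCard_subset_mul_choose hab_sub k
  simp only [insert_subset_iff, singleton_subset_iff, card_pair hab] at h
  have h' := congrArg (Nat.cast : ℕ → ℝ) h
  push_cast [Nat.cast_choose_two] at h'
  have hA : (2 : ℝ) ≤ #A := by exact_mod_cast card_pair hab ▸ card_le_card hab_sub
  have hA' : (#A : ℝ) * (#A - 1) ≠ 0 := by apply mul_ne_zero <;> linarith
  rw [eq_div_iff hA']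
  linear_combination 2 * h'

theorem sum_sum_eq_sum_card_filter_nsmul {β M : Type*} [AddCommMonoid M] {P : Finset β}
    {T : β → Finset α} {U : Finset α} (hT : ∀ S ∈ P, T S ⊆ U) (f : α → M) :
    ∑ S ∈ P, ∑ x ∈ T S, f x = ∑ x ∈ U, #{S ∈ P | x ∈ T S} • f x := by
  rw [sum_comm' (t' := U) (s' := fun x => {S ∈ P | x ∈ T S})]
  · simp only [sum_const]
  · intro S x
    simp only [mem_filter]
    exact ⟨fun h => ⟨h, hT S h.1 h.2⟩, fun h => h.1⟩

end Finset

section UniformVariance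

variable {α β E : Type*} [NormedAddCommGroup E] [InnerProductSpace ℝ E]

noncomputable def uniformVariance (P : Finset β) (w : β → E) : ℝ :=
  (#P : ℝ)⁻¹ * ∑ S ∈ P, ‖w S‖ ^ 2 - ‖(#P : ℝ)⁻¹ • ∑ S ∈ P, w S‖ ^ 2

theorem uniformVariance_smul_add_const (P : Finset β) (w : β → E) (a : ℝ) (b : E) :
    uniformVariance P (fun S => a • w S + b) = a ^ 2 * uniformVariance P w := by
  rcases P.eq_empty_or_nonempty with rfl | hP
  · simp [uniformVariance]
  have hN : (#P : ℝ) ≠ 0 := by exact_mod_cast hP.card_pos.ne'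
  have hmean : (#P : ℝ)⁻¹ • ∑ S ∈ P, (a • w S + b) = a • ((#P : ℝ)⁻¹ • ∑ S ∈ P, w S) + b := by
    rw [sum_add_distrib, sum_const, ← smul_sum, smul_add, smul_comm, ← Nat.cast_smul_eq_nsmul ℝ,
      smul_smul (#P : ℝ)⁻¹, inv_mul_cancel₀ hN, one_smul]
  rw [uniformVariance, uniformVariance, hmean]
  simp only [norm_add_sq_real, norm_smul, mul_pow, Real.norm_eq_abs,
    sq_abs, real_inner_smul_left, sum_add_distrib, ← mul_sum, ← sum_inner, sum_const,
    nsmul_eq_mul]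
  field_simp
  ring

theorem norm_sum_sq_eq_sum_product_inner (s : Finset α) (z : α → E) :
    ‖∑ m ∈ s, z m‖ ^ 2 = ∑ p ∈ s ×ˢ s, inner ℝ (z p.1) (z p.2) := by
  rw [← real_inner_self_eq_norm_sq, sum_product, sum_inner]
  simp only [inner_sum]

variable [DecidableEq α]

theorem sum_powersetCard_sum (A : Finset α) (k : ℕ) (z : α → E) :
    ∑ S ∈ A.powersetCard k, ∑ m ∈ S, z m = ((#A).choose k * k / #A : ℝ) • ∑ m ∈ A, z m := by
  rw [sum_sum_eq_sum_card_filter_nsmul (fun S hS => (mem_powersetCard.1 hS).1), smul_sum]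
  refine sum_congr rfl fun m hm => ?_
  rw [← Nat.cast_smul_eq_nsmul ℝ, cast_card_filter_mem_powersetCard hm]

theorem sum_powersetCard_norm_sum_sq (A : Finset α) (k : ℕ) (z : α → E) :
    ∑ S ∈ A.powersetCard k, ‖∑ m ∈ S, z m‖ ^ 2
      = (#A).choose k * (k * (k - 1)) / (#A * (#A - 1)) * ‖∑ m ∈ A, z m‖ ^ 2
        + ((#A).choose k * k / #A - (#A).choose k * (k * (k - 1)) / (#A * (#A - 1)))
          * ∑ m ∈ A, ‖z m‖ ^ 2 := by
  set c₁ : ℝ := (#A).choose k * k / #A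
  set c₂ : ℝ := (#A).choose k * (k * (k - 1)) / (#A * (#A - 1))
  have hcount : ∀ p ∈ A ×ˢ A, (#{S ∈ A.powersetCard k | p ∈ S ×ˢ S} : ℝ)
      = c₂ + if p.1 = p.2 then c₁ - c₂ else 0 := by
    rintro ⟨a, b⟩ hp
    obtain ⟨ha, hb⟩ := mem_product.1 hp
    simp only [mem_product]
    split_ifs with hab
    · subst hab
      simp only [and_self, cast_card_filter_mem_powersetCard ha, c₁]
      ring
    · rw [cast_card_filter_mem_mem_powersetCard ha hb hab, add_zero]
  simp only [norm_sum_sq_eq_sum_product_inner]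
  rw [sum_sum_eq_sum_card_filter_nsmul fun S hS =>
      product_subset_product (mem_powersetCard.1 hS).1 (mem_powersetCard.1 hS).1]
  simp only [← Nat.cast_smul_eq_nsmul ℝ, smul_eq_mul]
  rw [sum_congr rfl fun p hp => by rw [hcount p hp], mul_sum]
  simp only [add_mul, sum_add_distrib, ite_mul, zero_mul, ← mul_sum]
  congr 1
  rw [sum_product, mul_sum]
  refine sum_congr rfl fun a ha => ?_
  simp only [sum_ite_eq, ha, if_true, real_inner_self_eq_norm_sq]

theorem uniformVariance_powersetCard_sum {A : Finset α} {k : ℕ} (hk : k ≤ #A) (hA : 2 ≤ #A)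
    (z : α → E) :
    uniformVariance (A.powersetCard k) (fun S => ∑ m ∈ S, z m)
      = k * (#A - k) / (#A * (#A - 1)) * (∑ m ∈ A, ‖z m‖ ^ 2 - ‖∑ m ∈ A, z m‖ ^ 2 / #A) := by
  have hN : ((#A).choose k : ℝ) ≠ 0 := by exact_mod_cast (Nat.choose_pos hk).ne'
  have hA' : (2 : ℝ) ≤ #A := by exact_mod_cast hA
  have hn : (#A : ℝ) ≠ 0 := by linarith
  have hn₁ : (#A : ℝ) - 1 ≠ 0 := by linarith
  rw [uniformVariance, card_powersetCard, sum_powersetCard_norm_sum_sq, sum_powersetCard_sum,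
    smul_smul, norm_smul, mul_pow, Real.norm_eq_abs, sq_abs]
  field_simp
  ring

end UniformVariance

theorem sum_Icc_exp_centered_eq_sin_div_sin (M : ℕ) (x : ℝ) (hx : Real.sin (x / 2) ≠ 0) :
    ∑ m ∈ Icc 1 M, Complex.exp (Complex.I * ((x * ((m : ℝ) - (M + 1) / 2) : ℝ) : ℂ))
      = ((Real.sin (M * x / 2) / Real.sin (x / 2) : ℝ) : ℂ) := by
  set f : ℕ → ℂ := fun j => Complex.exp (I * ((x * ((j : ℝ) - M / 2) : ℝ) : ℂ))
  have two_I_mul_sin (θ : ℝ) :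
      2 * I * (Real.sin θ : ℂ) = Complex.exp (θ * I) - Complex.exp (-θ * I) := by
    rw [ofReal_sin, mul_right_comm, two_sin]
    linear_combination (Complex.exp (-θ * I) - Complex.exp (θ * I)) * I_sq
  have telescope : ∀ m : ℕ, 2 * I * (Real.sin (x / 2) : ℂ) *
      Complex.exp (I * ((x * (((m + 1 : ℕ) : ℝ) - (M + 1) / 2) : ℝ) : ℂ)) = f (m + 1) - f m := by
    intro m
    simp only [f, two_I_mul_sin, sub_mul, ← Complex.exp_add]
    congr 2 <;> push_cast <;> ring
  have key : 2 * I * (Real.sin (x / 2) : ℂ) *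
      ∑ m ∈ Icc 1 M, Complex.exp (I * ((x * ((m : ℝ) - (M + 1) / 2) : ℝ) : ℂ))
      = 2 * I * (Real.sin (M * x / 2) : ℂ) := by
    rw [← Ico_add_one_right_eq_Icc, sum_Ico_eq_sum_range, Nat.add_sub_cancel, mul_sum]
    simp_rw [add_comm 1, telescope]
    rw [sum_range_sub, two_I_mul_sin]
    simp only [f]
    congr 2 <;> push_cast <;> ring
  have h2I : (2 * I : ℂ) ≠ 0 := mul_ne_zero two_ne_zero I_ne_zero
  rw [Complex.ofReal_div, eq_div_iff (Complex.ofReal_ne_zero.2 hx)]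
  rw [mul_assoc] at key
  linear_combination mul_left_cancel₀ h2I key

/-- Variance of the transmit-side random factor of the RIBES scheme:
`V[u] = 4·(Mₛ(M−Mₛ)/(M(M−1)))·(M − D²/M)` with `D = sin(Mx/2)/sin(x/2)`. -/
theorem stmt_6 (M Ms : ℕ) (hM : 2 ≤ M) (hMs : Ms ≤ M) (x : ℝ)
    (hx : Real.sin (x / 2) ≠ 0) :
    let D : ℝ := Real.sin (M * x / 2) / Real.sin (x / 2)
    let z : ℕ → ℂ := fun m => Complex.exp (Complex.I * ((x * ((m : ℝ) - (M + 1) / 2) : ℝ) : ℂ))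
    let u : Finset ℕ → ℂ := fun S => 2 * ∑ m ∈ S, z m - ∑ m ∈ Finset.Icc 1 M, z m
    (1 / (Nat.choose M Ms : ℝ)) *
        ∑ S ∈ (Finset.Icc 1 M).powersetCard Ms, ‖u S‖ ^ 2
      - ‖(1 / (Nat.choose M Ms : ℂ)) *
          ∑ S ∈ (Finset.Icc 1 M).powersetCard Ms, u S‖ ^ 2
      = 4 * ((Ms : ℝ) * ((M : ℝ) - Ms) / ((M : ℝ) * ((M : ℝ) - 1))) *
          ((M : ℝ) - D ^ 2 / M) := by
  intro D z u
  have hcard : #(Icc 1 M) = M := by simp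
  have hsum : ∑ m ∈ Icc 1 M, z m = (D : ℂ) := sum_Icc_exp_centered_eq_sin_div_sin M x hx
  have hz : ∀ m, ‖z m‖ = 1 := fun m => by
    simp only [z, mul_comm I]
    exact norm_exp_ofReal_mul_I _
  have hu : u = fun S => (2 : ℝ) • ∑ m ∈ S, z m + -(D : ℂ) := by
    funext S
    simp [u, hsum, Complex.real_smul, sub_eq_add_neg]
  have key := uniformVariance_smul_add_const ((Icc 1 M).powersetCard Ms)
    (fun S => ∑ m ∈ S, z m) 2 (-(D : ℂ))
  rw [← hu, uniformVariance_powersetCard_sum (hcard.symm ▸ hMs) (hcard.symm ▸ hM), hcard,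
    hsum] at key
  convert key using 1
  · simp [uniformVariance, hcard, Complex.real_smul]
  · simp only [hz, one_pow, sum_const, hcard, nsmul_eq_mul, mul_one, norm_real, Real.norm_eq_abs,
      sq_abs]
    ring
end

section
/- Let M be a positive integer and N_H, N_V positive integers with N = N_H·N_V. Let M_s, N_s be integers with 0 ≤ M_s ≤ M, 0 ≤ N_s ≤ N, let L > 0 be real, and let x, a, b be reals with sin(x/2), sin(a/2), sin(b/2) all nonzero. With z_m = exp(i·x·(m−(M+1)/2)), u(S) = 2Σ_{m∈S} z_m − Σ_m z_m, ζ_n = exp(i(a(p−(N_H+1)/2)+b(q−(N_V+1)/2))) for n=(p,q), v(T) = 2Σ_{n∈T} ζ_n − Σ_n ζ_n, and β(S,T) = √(L/M)·u(S)·v(T), the average of β(S,T) over all pairs of a size-M_s subset S of {1,...,M} and a size-N_s subset T of the N_H×N_V grid equals √(L/M) · ((2M_s−M)(2N_s−N)/(MN)) · (sin(M·x/2)/sin(x/2)) · (sin(N_H·a/2)/sin(a/2)) · (sin(N_V·b/2)/sin(b/2)). -/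
open Finset Complex Real

lemma hexp_aux (θ : ℝ) : (2 : ℂ) * Complex.I * ((Real.sin θ : ℝ) : ℂ)
    = Complex.exp (Complex.I * θ) - Complex.exp (-(Complex.I * θ)) := by
  rw [Complex.ofReal_sin, Complex.sin]
  ring_nf
  rw [Complex.I_sq]
  ring

lemma dirichlet (M : ℕ) (x : ℝ) (hx : Real.sin (x / 2) ≠ 0) :
    ∑ m ∈ Finset.Icc 1 M, Complex.exp (Complex.I * ((x * ((m : ℝ) - (M + 1) / 2) : ℝ) : ℂ))
      = ((Real.sin (M * x / 2) / Real.sin (x / 2) : ℝ) : ℂ) := by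
  have hs : ((Real.sin (x / 2) : ℝ) : ℂ) ≠ 0 := by exact_mod_cast hx
  have h2I : (2 : ℂ) * Complex.I * (Real.sin (x / 2) : ℂ) ≠ 0 :=
    mul_ne_zero (mul_ne_zero two_ne_zero Complex.I_ne_zero) hs
  have key : (∑ m ∈ Finset.Icc 1 M,
        Complex.exp (Complex.I * ((x * ((m : ℝ) - (M + 1) / 2) : ℝ) : ℂ)))
        * ((2 : ℂ) * Complex.I * (Real.sin (x / 2) : ℂ))
      = (2 : ℂ) * Complex.I * (Real.sin (M * x / 2) : ℂ) := by
    rw [Finset.sum_mul, hexp_aux]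
    have hre : ∑ m ∈ Finset.Icc 1 M,
        Complex.exp (Complex.I * ((x * ((m : ℝ) - (M + 1) / 2) : ℝ) : ℂ))
          * (Complex.exp (Complex.I * (x / 2 : ℝ)) - Complex.exp (-(Complex.I * (x / 2 : ℝ))))
        = ∑ j ∈ Finset.range M,
            ((fun j : ℕ => Complex.exp (Complex.I * (x * ((j : ℝ) - (M : ℝ) / 2)))) (j + 1)
              - (fun j : ℕ => Complex.exp (Complex.I * (x * ((j : ℝ) - (M : ℝ) / 2)))) j) := by
      rw [show Finset.Icc 1 M = Finset.Ico 1 (M + 1) by rfl, Finset.sum_Ico_eq_sum_range]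
      simp only [Nat.add_sub_cancel]
      refine Finset.sum_congr rfl fun j hj => ?_
      rw [mul_sub, ← Complex.exp_add, ← Complex.exp_add]
      push_cast
      ring_nf
    rw [hre, Finset.sum_range_sub
      (fun j : ℕ => Complex.exp (Complex.I * (x * ((j : ℝ) - (M : ℝ) / 2)))), hexp_aux]
    push_cast
    ring_nf
  have hrhs : ((Real.sin (M * x / 2) / Real.sin (x / 2) : ℝ) : ℂ)
        * ((2 : ℂ) * Complex.I * (Real.sin (x / 2) : ℂ))
      = (2 : ℂ) * Complex.I * (Real.sin (M * x / 2) : ℂ) := by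
    rw [Complex.ofReal_div, div_mul_eq_mul_div, mul_div_assoc]
    rw [mul_div_cancel_right₀ _ hs]
    ring
  exact mul_right_cancel₀ h2I (key.trans hrhs.symm)

lemma count_mem_powersetCard {α : Type*} [DecidableEq α] (s : Finset α) (k : ℕ) (a : α)
    (ha : a ∈ s) :
    ((s.powersetCard (k + 1)).filter (fun S => a ∈ S)).card
      = (s.card - 1).choose k := by
  rw [← Finset.card_erase_of_mem ha, ← Finset.card_powersetCard k (s.erase a)]
  apply Finset.card_bij' (fun S _ => S.erase a) (fun T _ => insert a T)
  · intro S hS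
    simp only [Finset.mem_filter] at hS
    exact Finset.insert_erase hS.2
  · intro T hT
    simp only [Finset.mem_powersetCard] at hT
    exact Finset.erase_insert (fun h => (Finset.notMem_erase a s) (hT.1 h))
  · intro S hS
    simp only [Finset.mem_filter, Finset.mem_powersetCard] at hS
    simp only [Finset.mem_powersetCard]
    exact ⟨Finset.erase_subset_erase a hS.1.1,
      by rw [Finset.card_erase_of_mem hS.2, hS.1.2]; rfl⟩
  · intro T hT
    simp only [Finset.mem_powersetCard] at hT
    have haT : a ∉ T := fun h => (Finset.notMem_erase a s) (hT.1 h)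
    simp only [Finset.mem_filter, Finset.mem_powersetCard]
    refine ⟨⟨?_, by rw [Finset.card_insert_of_notMem haT, hT.2]⟩, Finset.mem_insert_self a T⟩
    exact Finset.insert_subset ha (hT.1.trans (Finset.erase_subset a s))

lemma sum_powersetCard_sum_s10 {α : Type*} [DecidableEq α] (s : Finset α) (k : ℕ) (f : α → ℂ) :
    (s.card : ℂ) * ∑ S ∈ s.powersetCard k, ∑ m ∈ S, f m
      = (k : ℂ) * (s.card.choose k : ℂ) * ∑ m ∈ s, f m := by
  rcases k with _ | k
  · simp
  have swap : ∑ S ∈ s.powersetCard (k + 1), ∑ m ∈ S, f m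
      = ((s.card - 1).choose k : ℂ) * ∑ m ∈ s, f m := by
    have h1 : ∀ S ∈ s.powersetCard (k + 1), ∑ m ∈ S, f m
        = ∑ m ∈ s, if m ∈ S then f m else 0 := by
      intro S hS
      rw [Finset.sum_ite_mem, Finset.inter_eq_right.2 (Finset.mem_powersetCard.1 hS).1]
    rw [Finset.sum_congr rfl h1, Finset.sum_comm]
    rw [Finset.mul_sum]
    refine Finset.sum_congr rfl fun m hm => ?_
    rw [← Finset.sum_filter, Finset.sum_const, count_mem_powersetCard s k m hm]
    simp [mul_comm]
  rw [swap]
  rcases Nat.eq_zero_or_pos s.card with h0 | hpos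
  · rw [h0]
    simp
  · obtain ⟨n, hn⟩ := Nat.exists_eq_succ_of_ne_zero hpos.ne'
    rw [hn, Nat.succ_sub_one]
    have h : (n + 1) * n.choose k = (n + 1).choose (k + 1) * (k + 1) := by
      rw [← Nat.add_one_mul_choose_eq]
    have cast : ((n : ℂ) + 1) * (n.choose k : ℂ) = ((n + 1).choose (k + 1) : ℂ) * ((k : ℂ) + 1) := by
      exact_mod_cast h
    push_cast
    linear_combination (∑ m ∈ s, f m) * cast
lemma grid_factor (NH NV : ℕ) (a b : ℝ) :
    ∑ n ∈ Finset.Icc 1 NH ×ˢ Finset.Icc 1 NV,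
        Complex.exp (Complex.I *
          ((a * ((n.1 : ℝ) - (NH + 1) / 2) + b * ((n.2 : ℝ) - (NV + 1) / 2) : ℝ) : ℂ))
      = (∑ p ∈ Finset.Icc 1 NH, Complex.exp (Complex.I * ((a * ((p : ℝ) - (NH + 1) / 2) : ℝ) : ℂ)))
        * (∑ q ∈ Finset.Icc 1 NV,
            Complex.exp (Complex.I * ((b * ((q : ℝ) - (NV + 1) / 2) : ℝ) : ℂ))) := by
  rw [Finset.sum_mul_sum, Finset.sum_product]
  refine Finset.sum_congr rfl fun p _ => Finset.sum_congr rfl fun q _ => ?_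
  rw [← Complex.exp_add, Complex.ofReal_add]
  ring_nf

set_option maxHeartbeats 1000000 in
/-- Mean of the scaling factor β in Lemma 2:
`E[β] = √(L/M)·((2Mₛ−M)(2Nₛ−N)/(MN))·μ₁·μ₂·μ₃`. -/
theorem stmt_10 (M : ℕ) (hM : 0 < M) (NH NV : ℕ) (hNH : 0 < NH) (hNV : 0 < NV)
    (N : ℕ) (hN : N = NH * NV) (Ms Ns : ℕ) (hMs : Ms ≤ M) (hNs : Ns ≤ N)
    (L : ℝ) (hL : 0 < L) (x a b : ℝ)
    (hx : Real.sin (x / 2) ≠ 0) (ha : Real.sin (a / 2) ≠ 0) (hb : Real.sin (b / 2) ≠ 0) :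
    let z : ℕ → ℂ := fun m => Complex.exp (Complex.I * ((x * ((m : ℝ) - (M + 1) / 2) : ℝ) : ℂ))
    let u : Finset ℕ → ℂ := fun S => 2 * ∑ m ∈ S, z m - ∑ m ∈ Finset.Icc 1 M, z m
    let grid : Finset (ℕ × ℕ) := Finset.Icc 1 NH ×ˢ Finset.Icc 1 NV
    let ζ : ℕ × ℕ → ℂ := fun n =>
      Complex.exp (Complex.I *
        ((a * ((n.1 : ℝ) - (NH + 1) / 2) + b * ((n.2 : ℝ) - (NV + 1) / 2) : ℝ) : ℂ))
    let v : Finset (ℕ × ℕ) → ℂ := fun T => 2 * ∑ n ∈ T, ζ n - ∑ n ∈ grid, ζ n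
    let β : Finset ℕ → Finset (ℕ × ℕ) → ℂ := fun S T =>
      ((Real.sqrt (L / M) : ℝ) : ℂ) * u S * v T
    (1 / ((Nat.choose M Ms : ℂ) * (Nat.choose N Ns : ℂ))) *
        ∑ S ∈ (Finset.Icc 1 M).powersetCard Ms, ∑ T ∈ grid.powersetCard Ns, β S T
      = ((Real.sqrt (L / M) : ℝ) : ℂ) *
          (((2 * (Ms : ℝ) - M) * (2 * (Ns : ℝ) - N) / ((M : ℝ) * N) : ℝ) : ℂ) *
          ((Real.sin (M * x / 2) / Real.sin (x / 2) : ℝ) : ℂ) *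
          ((Real.sin (NH * a / 2) / Real.sin (a / 2) : ℝ) : ℂ) *
          ((Real.sin (NV * b / 2) / Real.sin (b / 2) : ℝ) : ℂ) := by
  intro z u grid ζ v β
  have hNpos : 0 < N := hN ▸ Nat.mul_pos hNH hNV
  have hMc : (M : ℂ) ≠ 0 := Nat.cast_ne_zero.2 hM.ne'
  have hNc : (N : ℂ) ≠ 0 := Nat.cast_ne_zero.2 hNpos.ne'
  have hC1 : ((M.choose Ms : ℕ) : ℂ) ≠ 0 := Nat.cast_ne_zero.2 (Nat.choose_pos hMs).ne'
  have hC2 : ((N.choose Ns : ℕ) : ℂ) ≠ 0 := Nat.cast_ne_zero.2 (Nat.choose_pos hNs).ne'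
  have hcard1 : (Finset.Icc 1 M).card = M := by simp
  have hcard2 : grid.card = N := by simp [grid, hN]
  -- averaged sums
  have hSz : (M : ℂ) * ∑ S ∈ (Finset.Icc 1 M).powersetCard Ms, ∑ m ∈ S, z m
      = (Ms : ℂ) * (M.choose Ms : ℂ) * ∑ m ∈ Finset.Icc 1 M, z m := by
    have h := sum_powersetCard_sum_s10 (Finset.Icc 1 M) Ms z
    rw [hcard1] at h
    exact h
  have hSζ : (N : ℂ) * ∑ T ∈ grid.powersetCard Ns, ∑ n ∈ T, ζ n
      = (Ns : ℂ) * (N.choose Ns : ℂ) * ∑ n ∈ grid, ζ n := by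
    have h := sum_powersetCard_sum_s10 grid Ns ζ
    rw [hcard2] at h
    exact h
  have hU : ∑ S ∈ (Finset.Icc 1 M).powersetCard Ms, u S
      = (M.choose Ms : ℂ) * ((2 * (Ms : ℂ) - M) / M) * ∑ m ∈ Finset.Icc 1 M, z m := by
    have expand : ∑ S ∈ (Finset.Icc 1 M).powersetCard Ms, u S
        = 2 * (∑ S ∈ (Finset.Icc 1 M).powersetCard Ms, ∑ m ∈ S, z m)
          - (M.choose Ms : ℂ) * ∑ m ∈ Finset.Icc 1 M, z m := by
      rw [Finset.sum_sub_distrib, ← Finset.mul_sum, Finset.sum_const,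
        Finset.card_powersetCard, hcard1, nsmul_eq_mul]
    rw [expand]
    field_simp
    linear_combination 2 * hSz
  have hV : ∑ T ∈ grid.powersetCard Ns, v T
      = (N.choose Ns : ℂ) * ((2 * (Ns : ℂ) - N) / N) * ∑ n ∈ grid, ζ n := by
    have expand : ∑ T ∈ grid.powersetCard Ns, v T
        = 2 * (∑ T ∈ grid.powersetCard Ns, ∑ n ∈ T, ζ n)
          - (N.choose Ns : ℂ) * ∑ n ∈ grid, ζ n := by
      rw [Finset.sum_sub_distrib, ← Finset.mul_sum, Finset.sum_const,
        Finset.card_powersetCard, hcard2, nsmul_eq_mul]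
    rw [expand]
    field_simp
    linear_combination 2 * hSζ
  have hE1 : ∑ m ∈ Finset.Icc 1 M, z m
      = ((Real.sin (M * x / 2) / Real.sin (x / 2) : ℝ) : ℂ) := dirichlet M x hx
  have hE2 : ∑ n ∈ grid, ζ n
      = ((Real.sin (NH * a / 2) / Real.sin (a / 2) : ℝ) : ℂ)
        * ((Real.sin (NV * b / 2) / Real.sin (b / 2) : ℝ) : ℂ) := by
    have h := grid_factor NH NV a b
    rw [dirichlet NH a ha, dirichlet NV b hb] at h
    exact h
  have hfact : ∑ S ∈ (Finset.Icc 1 M).powersetCard Ms, ∑ T ∈ grid.powersetCard Ns, β S T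
      = ((Real.sqrt (L / M) : ℝ) : ℂ)
        * (∑ S ∈ (Finset.Icc 1 M).powersetCard Ms, u S)
        * (∑ T ∈ grid.powersetCard Ns, v T) := by
    have hβ : ∀ S T, β S T = (((Real.sqrt (L / M) : ℝ) : ℂ) * u S) * v T := fun _ _ => rfl
    calc ∑ S ∈ (Finset.Icc 1 M).powersetCard Ms, ∑ T ∈ grid.powersetCard Ns, β S T
        = ∑ S ∈ (Finset.Icc 1 M).powersetCard Ms, ∑ T ∈ grid.powersetCard Ns,
            (((Real.sqrt (L / M) : ℝ) : ℂ) * u S) * v T := by simp only [hβ]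
      _ = (∑ S ∈ (Finset.Icc 1 M).powersetCard Ms, ((Real.sqrt (L / M) : ℝ) : ℂ) * u S)
            * (∑ T ∈ grid.powersetCard Ns, v T) := (Finset.sum_mul_sum _ _ _ _).symm
      _ = _ := by rw [← Finset.mul_sum]
  rw [hfact, hU, hV, hE1, hE2]
  have hxs : ((Real.sin (x / 2) : ℝ) : ℂ) ≠ 0 := by exact_mod_cast hx
  have has : ((Real.sin (a / 2) : ℝ) : ℂ) ≠ 0 := by exact_mod_cast ha
  have hbs : ((Real.sin (b / 2) : ℝ) : ℂ) ≠ 0 := by exact_mod_cast hb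
  have hfrac : (((2 * (Ms : ℝ) - M) * (2 * (Ns : ℝ) - N) / ((M : ℝ) * N) : ℝ) : ℂ)
      = ((2 * (Ms : ℂ) - M) / M) * ((2 * (Ns : ℂ) - N) / N) := by
    push_cast
    ring
  rw [hfrac]
  have hcc : ((M.choose Ms : ℕ) : ℂ) * ((N.choose Ns : ℕ) : ℂ) ≠ 0 := mul_ne_zero hC1 hC2
  apply mul_left_cancel₀ hcc
  rw [← mul_assoc, mul_one_div, div_self hcc, one_mul]
  ring
end

section
/- Let M ≥ 2 and M_s be integers with M/2 < M_s < M, let P, L, σ², s_N be positive reals, and suppose M²·sin²(3π/(2M)) > 1. Let μ be a real number with 0 < μ² ≤ 1/sin²(3π/(2M)), and set s_M = 2M_s − M. Then (P·(μ²/M)·L·s_M²·s_N²/M²) / (P·L·(4M_s(M−M_s)/(M²(M−1)))·(M − μ²/M)·s_N² + σ²) ≤ s_M²·(M−1) / (4·M_s·(M−M_s)·(M²·sin²(3π/(2M)) − 1)). -/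
open Real

set_option maxHeartbeats 1000000

/-- Lemma 3, first bound (UB1): the eavesdropper's SNR on the bearing of Bob is
bounded by `(2Mₛ−M)²(M−1)/(4Mₛ(M−Mₛ)(M²sin²(3π/(2M))−1))`. -/
theorem stmt_12 (M Ms : ℕ) (hM : 2 ≤ M)
    (h1 : (M : ℝ) / 2 < (Ms : ℝ)) (h2 : Ms < M)
    (P L σ2 sN : ℝ) (hP : 0 < P) (hL : 0 < L) (hσ : 0 < σ2) (hsN : 0 < sN)
    (hMsin : 1 < (M : ℝ) ^ 2 * Real.sin (3 * Real.pi / (2 * M)) ^ 2)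
    (μ : ℝ) (hμ0 : 0 < μ ^ 2)
    (hμ : μ ^ 2 ≤ 1 / Real.sin (3 * Real.pi / (2 * M)) ^ 2) :
    let sM : ℝ := 2 * (Ms : ℝ) - M
    (P * (μ ^ 2 / M) * L * sM ^ 2 * sN ^ 2 / (M : ℝ) ^ 2) /
        (P * L * (4 * (Ms : ℝ) * ((M : ℝ) - Ms) / ((M : ℝ) ^ 2 * ((M : ℝ) - 1))) *
            ((M : ℝ) - μ ^ 2 / M) * sN ^ 2 + σ2)
      ≤ sM ^ 2 * ((M : ℝ) - 1) /
          (4 * (Ms : ℝ) * ((M : ℝ) - Ms) *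
            ((M : ℝ) ^ 2 * Real.sin (3 * Real.pi / (2 * M)) ^ 2 - 1)) := by
  intro sM
  set s : ℝ := Real.sin (3 * Real.pi / (2 * M)) ^ 2 with hs
  have hMR : (2:ℝ) ≤ (M:ℝ) := by exact_mod_cast hM
  have hMpos : (0:ℝ) < M := by linarith
  have hMs0 : (0:ℝ) < Ms := by linarith
  have hMMs : (0:ℝ) < (M:ℝ) - Ms := by
    have : (Ms:ℝ) < M := by exact_mod_cast h2
    linarith
  have hsMpos : 0 < sM := by simp only [sM]; linarith
  have hspos : 0 < s := by nlinarith [sq_nonneg ((M:ℝ))]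
  have hμs : μ ^ 2 * s ≤ 1 := (le_div_iff₀ hspos).mp hμ
  have hμM : μ ^ 2 < (M:ℝ) ^ 2 := by nlinarith
  have hMμ : 0 < (M:ℝ) - μ ^ 2 / M := by
    rw [sub_pos, div_lt_iff₀ hMpos]; nlinarith
  have hD0 : 0 < P * L * (4 * (Ms : ℝ) * ((M : ℝ) - Ms) / ((M : ℝ) ^ 2 * ((M : ℝ) - 1))) *
      ((M : ℝ) - μ ^ 2 / M) * sN ^ 2 := by
    have h1' : 0 < 4 * (Ms : ℝ) * ((M : ℝ) - Ms) / ((M : ℝ) ^ 2 * ((M : ℝ) - 1)) := by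
      apply div_pos <;> nlinarith
    positivity
  have hN : 0 < P * (μ ^ 2 / M) * L * sM ^ 2 * sN ^ 2 / (M : ℝ) ^ 2 := by
    have : 0 < μ ^ 2 / M := div_pos hμ0 hMpos
    positivity
  have hDr : 0 < 4 * (Ms : ℝ) * ((M : ℝ) - Ms) * ((M : ℝ) ^ 2 * s - 1) :=
    mul_pos (by nlinarith) (by linarith)
  have step1 : (P * (μ ^ 2 / M) * L * sM ^ 2 * sN ^ 2 / (M : ℝ) ^ 2) /
        (P * L * (4 * (Ms : ℝ) * ((M : ℝ) - Ms) / ((M : ℝ) ^ 2 * ((M : ℝ) - 1))) *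
            ((M : ℝ) - μ ^ 2 / M) * sN ^ 2 + σ2)
      ≤ (P * (μ ^ 2 / M) * L * sM ^ 2 * sN ^ 2 / (M : ℝ) ^ 2) /
        (P * L * (4 * (Ms : ℝ) * ((M : ℝ) - Ms) / ((M : ℝ) ^ 2 * ((M : ℝ) - 1))) *
            ((M : ℝ) - μ ^ 2 / M) * sN ^ 2) := by
    apply div_le_div_of_nonneg_left hN.le hD0
    linarith
  refine step1.trans ?_
  have heq : (P * (μ ^ 2 / M) * L * sM ^ 2 * sN ^ 2 / (M : ℝ) ^ 2) /
        (P * L * (4 * (Ms : ℝ) * ((M : ℝ) - Ms) / ((M : ℝ) ^ 2 * ((M : ℝ) - 1))) *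
            ((M : ℝ) - μ ^ 2 / M) * sN ^ 2)
      = (μ ^ 2 * sM ^ 2 * ((M:ℝ) - 1)) /
        (4 * (Ms : ℝ) * ((M : ℝ) - Ms) * ((M:ℝ) ^ 2 - μ ^ 2)) := by
    have hMne : (M:ℝ) ≠ 0 := hMpos.ne'
    have hM1ne : (M:ℝ) - 1 ≠ 0 := ne_of_gt (by linarith)
    rw [div_eq_div_iff hD0.ne' (ne_of_gt (mul_pos (by nlinarith : (0:ℝ) < 4 * (Ms : ℝ) * ((M : ℝ) - Ms)) (by nlinarith : (0:ℝ) < (M:ℝ) ^ 2 - μ ^ 2)))]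
    field_simp
  rw [heq, div_le_div_iff₀ (mul_pos (by nlinarith : (0:ℝ) < 4 * (Ms : ℝ) * ((M : ℝ) - Ms)) (by nlinarith : (0:ℝ) < (M:ℝ) ^ 2 - μ ^ 2)) hDr]
  nlinarith [mul_nonneg (mul_nonneg (mul_nonneg (mul_nonneg hsMpos.le (by linarith : (0:ℝ) ≤ (M:ℝ) - 1)) (by nlinarith : (0:ℝ) ≤ 4 * (Ms:ℝ) * ((M:ℝ) - Ms))) (sq_nonneg (M:ℝ))) (by linarith : (0:ℝ) ≤ 1 - μ ^ 2 * s)]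
end

section
/- Let N ≥ 2 and N_s be integers with N/2 < N_s < N, let P, L, σ², s_M be positive reals, and let λ, ν be reals with 0 < ν² ≤ λ² < N². Set s_N = 2N_s − N. Then (P·(L/M)·s_M²·(s_N²/N²)·ν²) / (P·(L/M)·s_M²·(4N_s(N−N_s)/(N(N−1)))·(N − ν²/N) + σ²) ≤ s_N²·(N−1)·λ² / (4·N_s·(N−N_s)·(N² − λ²)), where M is any positive real. -/
set_option maxHeartbeats 1000000


open Real

/-- Lemma 3, second bound (UB2): the eavesdropper's SNR at Bob's range is
bounded by `(2Nₛ−N)²(N−1)λ²/(4Nₛ(N−Nₛ)(N²−λ²))`. -/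
theorem stmt_13 (N Ns : ℕ) (hN : 2 ≤ N)
    (h1 : (N : ℝ) / 2 < (Ns : ℝ)) (h2 : Ns < N)
    (P L σ2 sM M : ℝ) (hP : 0 < P) (hL : 0 < L) (hσ : 0 < σ2) (hsM : 0 < sM)
    (hM : 0 < M)
    (lam ν : ℝ) (hν0 : 0 < ν ^ 2) (hnu_lam : ν ^ 2 ≤ lam ^ 2)
    (hlam : lam ^ 2 < (N : ℝ) ^ 2) :
    let sN : ℝ := 2 * (Ns : ℝ) - N
    (P * (L / M) * sM ^ 2 * (sN ^ 2 / (N : ℝ) ^ 2) * ν ^ 2) /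
        (P * (L / M) * sM ^ 2 *
            (4 * (Ns : ℝ) * ((N : ℝ) - Ns) / ((N : ℝ) * ((N : ℝ) - 1))) *
            ((N : ℝ) - ν ^ 2 / N) + σ2)
      ≤ sN ^ 2 * ((N : ℝ) - 1) * lam ^ 2 /
          (4 * (Ns : ℝ) * ((N : ℝ) - Ns) * ((N : ℝ) ^ 2 - lam ^ 2)) := by
  intro sN
  have hN2 : (2 : ℝ) ≤ (N : ℝ) := by exact_mod_cast hN
  have hNpos : (0 : ℝ) < N := by linarith
  have hN1 : (0 : ℝ) < (N : ℝ) - 1 := by linarith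
  have hNs : (0 : ℝ) < (Ns : ℝ) := by linarith
  have hNs2 : (0 : ℝ) < (N : ℝ) - Ns := by
    have : (Ns : ℝ) < N := by exact_mod_cast h2
    linarith
  have hc : (0 : ℝ) < P * (L / M) * sM ^ 2 := by positivity
  have hν2 : ν ^ 2 < (N : ℝ) ^ 2 := lt_of_le_of_lt hnu_lam hlam
  have hNsq : (N : ℝ) - ν ^ 2 / N > 0 := by
    rw [gt_iff_lt, sub_pos, div_lt_iff₀ hNpos]
    nlinarith
  have hD0 : (0 : ℝ) < P * (L / M) * sM ^ 2 *
      (4 * (Ns : ℝ) * ((N : ℝ) - Ns) / ((N : ℝ) * ((N : ℝ) - 1))) *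
      ((N : ℝ) - ν ^ 2 / N) := by positivity
  have hA : (0 : ℝ) ≤ P * (L / M) * sM ^ 2 * (sN ^ 2 / (N : ℝ) ^ 2) * ν ^ 2 := by
    positivity
  have step1 :
      (P * (L / M) * sM ^ 2 * (sN ^ 2 / (N : ℝ) ^ 2) * ν ^ 2) /
        (P * (L / M) * sM ^ 2 *
            (4 * (Ns : ℝ) * ((N : ℝ) - Ns) / ((N : ℝ) * ((N : ℝ) - 1))) *
            ((N : ℝ) - ν ^ 2 / N) + σ2)
      ≤ (P * (L / M) * sM ^ 2 * (sN ^ 2 / (N : ℝ) ^ 2) * ν ^ 2) /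
        (P * (L / M) * sM ^ 2 *
            (4 * (Ns : ℝ) * ((N : ℝ) - Ns) / ((N : ℝ) * ((N : ℝ) - 1))) *
            ((N : ℝ) - ν ^ 2 / N)) :=
    div_le_div_of_nonneg_left hA hD0 (by linarith)
  have step2 :
      (P * (L / M) * sM ^ 2 * (sN ^ 2 / (N : ℝ) ^ 2) * ν ^ 2) /
        (P * (L / M) * sM ^ 2 *
            (4 * (Ns : ℝ) * ((N : ℝ) - Ns) / ((N : ℝ) * ((N : ℝ) - 1))) *
            ((N : ℝ) - ν ^ 2 / N))
      = sN ^ 2 * ((N : ℝ) - 1) * ν ^ 2 /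
          (4 * (Ns : ℝ) * ((N : ℝ) - Ns) * ((N : ℝ) ^ 2 - ν ^ 2)) := by
    have hNν : ((N : ℝ) ^ 2 - ν ^ 2) ≠ 0 := by nlinarith
    have hden : (4 * (Ns : ℝ) * ((N : ℝ) - Ns) * ((N : ℝ) ^ 2 - ν ^ 2)) ≠ 0 := by
      exact ne_of_gt (mul_pos (by positivity) (sub_pos.mpr hν2))
    rw [div_eq_div_iff hD0.ne' hden]
    field_simp
  have step3 :
      sN ^ 2 * ((N : ℝ) - 1) * ν ^ 2 /
          (4 * (Ns : ℝ) * ((N : ℝ) - Ns) * ((N : ℝ) ^ 2 - ν ^ 2))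
      ≤ sN ^ 2 * ((N : ℝ) - 1) * lam ^ 2 /
          (4 * (Ns : ℝ) * ((N : ℝ) - Ns) * ((N : ℝ) ^ 2 - lam ^ 2)) := by
    have hd1 : (0:ℝ) < 4 * (Ns : ℝ) * ((N : ℝ) - Ns) * ((N : ℝ) ^ 2 - ν ^ 2) :=
      mul_pos (by positivity) (sub_pos.mpr hν2)
    have hd2 : (0:ℝ) < 4 * (Ns : ℝ) * ((N : ℝ) - Ns) * ((N : ℝ) ^ 2 - lam ^ 2) :=
      mul_pos (by positivity) (sub_pos.mpr hlam)
    rw [div_le_div_iff₀ hd1 hd2]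
    nlinarith [sq_nonneg sN, mul_pos hNs hNs2, sq_nonneg (sN * N),
      mul_nonneg (mul_nonneg (sq_nonneg sN) hN1.le) (mul_pos hNs hNs2).le,
      mul_le_mul_of_nonneg_left hnu_lam
        (mul_nonneg (mul_nonneg (mul_nonneg (sq_nonneg sN) hN1.le)
          (by positivity : (0:ℝ) ≤ 4 * (Ns:ℝ) * ((N:ℝ) - Ns))) (sq_nonneg (N:ℝ)))]
  calc _ ≤ _ := step1
    _ = _ := step2
    _ ≤ _ := step3
end

section
/- Let M, η_B, η_E be positive real numbers and define f : ℝ → ℝ by f(s) = log(1 + η_B·(2s−M)²) − log(1 + η_E·(2s−M)²/(4s(M−s))). Then for every s with M/2 < s < M, f is differentiable at s and f'(s) = 0 if and only if 16·η_B·s²·(M−s)² − η_B·η_E·(2s−M)⁴ − M²·η_E = 0. -/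
/-!
Since `4 s (M - s) = M² - (2s - M)²`, the objective is `φ ((2s - M)²)` with
`φ t = log (1 + η_B t) - log (1 + η_E t / (M² - t))`. On `(M/2, M)` the inner factor
`2s - M` does not vanish, so the critical points of the objective are those of `φ` at
`t = (2s - M)²`, and clearing the denominators of
`φ' t = η_B / (1 + η_B t) - η_E M² / ((M² - t)(M² - t + η_E t))` gives the quartic condition.
-/

open Real

lemma hasDerivAt_log_one_add_mul {a t : ℝ} (ht : 1 + a * t ≠ 0) :
    HasDerivAt (fun t => log (1 + a * t)) (a / (1 + a * t)) t := by
  simpa using (((hasDerivAt_id t).const_mul a).const_add 1).log ht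

lemma hasDerivAt_log_one_add_mul_div_sub {b c t : ℝ} (hc : c - t ≠ 0)
    (hbc : c - t + b * t ≠ 0) :
    HasDerivAt (fun t => log (1 + b * t / (c - t)))
      (b * c / ((c - t) * (c - t + b * t))) t := by
  have hquot : HasDerivAt (fun t => b * t / (c - t)) ((b * (c - t) + b * t) / (c - t) ^ 2) t := by
    simpa using ((hasDerivAt_id t).const_mul b).fun_div ((hasDerivAt_id t).const_sub c) hc
  have hpos : 1 + b * t / (c - t) ≠ 0 := by
    rw [one_add_div hc]
    exact div_ne_zero hbc hc
  convert (hquot.const_add 1).log hpos using 1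
  field_simp
  ring

lemma div_one_add_mul_sub_div_eq_zero_iff {M ηB ηE t : ℝ} (hB : 1 + ηB * t ≠ 0) (hM : M ^ 2 - t ≠ 0)
    (hE : M ^ 2 - t + ηE * t ≠ 0) :
    ηB / (1 + ηB * t) - ηE * M ^ 2 / ((M ^ 2 - t) * (M ^ 2 - t + ηE * t)) = 0 ↔
      ηB * (M ^ 2 - t) ^ 2 - ηB * ηE * t ^ 2 - M ^ 2 * ηE = 0 := by
  rw [sub_eq_zero, div_eq_div_iff hB (mul_ne_zero hM hE)]
  constructor <;> intro h <;> linear_combination h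

theorem stmt_14_general (M ηB ηE : ℝ) (hB : 0 < ηB) (hE : 0 < ηE) :
    let f : ℝ → ℝ := fun s =>
      Real.log (1 + ηB * (2 * s - M) ^ 2) -
        Real.log (1 + ηE * (2 * s - M) ^ 2 / (4 * s * (M - s)))
    ∀ s : ℝ, M / 2 < s → s < M →
      DifferentiableAt ℝ f s ∧
        (deriv f s = 0 ↔
          16 * ηB * s ^ 2 * (M - s) ^ 2 - ηB * ηE * (2 * s - M) ^ 4
            - M ^ 2 * ηE = 0) := by
  intro f s hs hsM
  set t := (2 * s - M) ^ 2 with ht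
  have hd : 2 * s - M ≠ 0 := by linarith
  have hMt : 0 < M ^ 2 - t := by nlinarith
  have hf : f = (fun t => log (1 + ηB * t) - log (1 + ηE * t / (M ^ 2 - t))) ∘
      fun s => (2 * s - M) ^ 2 := by
    funext s
    simp only [f, Function.comp, show 4 * s * (M - s) = M ^ 2 - (2 * s - M) ^ 2 by ring]
  have hφ := (hasDerivAt_log_one_add_mul (a := ηB) (t := t) (by positivity)).fun_sub
    (hasDerivAt_log_one_add_mul_div_sub (b := ηE) hMt.ne' (by positivity))
  have hsq : HasDerivAt (fun s => (2 * s - M) ^ 2) (2 * (2 * s - M) * 2) s := by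
    simpa using (((hasDerivAt_id s).const_mul 2).sub_const M).fun_pow 2
  have hfd : HasDerivAt f _ s := hf ▸ hφ.comp s hsq
  refine ⟨hfd.differentiableAt, ?_⟩
  rw [hfd.deriv, mul_eq_zero, or_iff_left (by simpa using hd),
    div_one_add_mul_sub_div_eq_zero_iff (by positivity) hMt.ne' (by positivity), ht]
  ring_nf

/-- Critical-point characterization in the proof of Theorem 1: the worst-case
secrecy-rate objective has vanishing derivative on `(M/2, M)` exactly when
`16η_B s²(M−s)² − η_B η_E (2s−M)⁴ − M² η_E = 0`. -/
theorem stmt_14 (M ηB ηE : ℝ) (hM : 0 < M) (hB : 0 < ηB) (hE : 0 < ηE) :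
    let f : ℝ → ℝ := fun s =>
      Real.log (1 + ηB * (2 * s - M) ^ 2) -
        Real.log (1 + ηE * (2 * s - M) ^ 2 / (4 * s * (M - s)))
    ∀ s : ℝ, M / 2 < s → s < M →
      DifferentiableAt ℝ f s ∧
        (deriv f s = 0 ↔
          16 * ηB * s ^ 2 * (M - s) ^ 2 - ηB * ηE * (2 * s - M) ^ 4
            - M ^ 2 * ηE = 0) :=
  stmt_14_general M ηB ηE hB hE
end

section
/- Let M > 0, η_B > 0, and 0 < η_E < 1 be real numbers with η_E < η_B·M². Then the equation η_B·(M² − t)² = η_B·η_E·t² + M²·η_E has exactly one solution t in the open interval (0, M²), namely t = (M² − M·√(η_E·M² + η_E·(1−η_E)/η_B)) / (1 − η_E). -/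
open Real

/-- Solution of the critical-point quadratic from Theorem 1: the equation
`η_B(M²−t)² = η_B η_E t² + M² η_E` has exactly one root in `(0, M²)`, namely
`t = (M² − M·√(η_E M² + η_E(1−η_E)/η_B))/(1−η_E)`. -/
theorem stmt_15 (M ηB ηE : ℝ) (hM : 0 < M) (hB : 0 < ηB)
    (hE0 : 0 < ηE) (hE1 : ηE < 1) (hEB : ηE < ηB * M ^ 2) :
    let tstar : ℝ :=
      (M ^ 2 - M * Real.sqrt (ηE * M ^ 2 + ηE * (1 - ηE) / ηB)) / (1 - ηE)
    tstar ∈ Set.Ioo 0 (M ^ 2) ∧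
      ηB * (M ^ 2 - tstar) ^ 2 = ηB * ηE * tstar ^ 2 + M ^ 2 * ηE ∧
      ∀ t ∈ Set.Ioo (0 : ℝ) (M ^ 2),
        ηB * (M ^ 2 - t) ^ 2 = ηB * ηE * t ^ 2 + M ^ 2 * ηE → t = tstar := by
  intro tstar
  have h1E : 0 < 1 - ηE := by linarith
  set c : ℝ := ηE * M ^ 2 + ηE * (1 - ηE) / ηB with hc
  have hcpos : 0 < c := by positivity
  set s := Real.sqrt c with hsdef
  have hs0 : 0 ≤ s := Real.sqrt_nonneg _
  have hs2 : s ^ 2 = c := Real.sq_sqrt hcpos.le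
  have key : ηB * s ^ 2 = ηB * ηE * M ^ 2 + ηE * (1 - ηE) := by
    rw [hs2, hc]; field_simp
  have hcM : c < M ^ 2 := by
    have h1 : ηB * c < ηB * M ^ 2 := by
      rw [← hs2]
      nlinarith [mul_lt_mul_of_pos_right hEB h1E]
    exact lt_of_mul_lt_mul_left h1 hB.le
  have hsM : s < M := (Real.sqrt_lt' hM).mpr hcM
  have hEMc : (ηE * M) ^ 2 < c := by
    have h1 : ηB * (ηE * M) ^ 2 < ηB * c := by
      rw [← hs2]
      nlinarith [mul_pos (mul_pos hB hE0) (mul_pos hE0 (mul_pos hM hM)),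
        mul_pos hE0 h1E]
    exact lt_of_mul_lt_mul_left h1 hB.le
  have hEMs : ηE * M < s := by
    rw [hsdef]
    exact (Real.lt_sqrt (mul_pos hE0 hM).le).mpr hEMc
  have htdef : tstar = (M ^ 2 - M * s) / (1 - ηE) := rfl
  have ht0 : 0 < tstar := by
    rw [htdef]
    apply div_pos _ h1E
    nlinarith
  have ht1 : tstar < M ^ 2 := by
    rw [htdef, div_lt_iff₀ h1E]
    nlinarith
  have hteq : (1 - ηE) * tstar = M ^ 2 - M * s := by
    rw [htdef]; field_simp
  have h2 : (1 - ηE) * (M ^ 2 - tstar) = M * s - ηE * M ^ 2 := by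
    have := hteq; ring_nf at this ⊢; linarith
  clear_value tstar s c
  refine ⟨⟨ht0, ht1⟩, ?_, ?_⟩
  · have h4 : ηB * (M * s - ηE * M ^ 2) ^ 2 =
        ηB * ηE * (M ^ 2 - M * s) ^ 2 + M ^ 2 * ηE * (1 - ηE) ^ 2 := by
      linear_combination ((1 - ηE) * M ^ 2) * key
    have h3 : ηB * (M ^ 2 - tstar) ^ 2 * (1 - ηE) ^ 2 =
        (ηB * ηE * tstar ^ 2 + M ^ 2 * ηE) * (1 - ηE) ^ 2 := by
      linear_combination h4 +
        (ηB * ((1 - ηE) * (M ^ 2 - tstar) + (M * s - ηE * M ^ 2))) * h2 -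
        (ηB * ηE * ((1 - ηE) * tstar + (M ^ 2 - M * s))) * hteq
    exact mul_right_cancel₀ (pow_ne_zero 2 h1E.ne') h3
  · rintro t ⟨ht0', ht1'⟩ heq
    have hfac : ηB * ((1 - ηE) * t - (M ^ 2 - M * s)) *
        ((1 - ηE) * t - (M ^ 2 + M * s)) = 0 := by
      linear_combination (1 - ηE) * heq - M ^ 2 * key
    have hBneg : (1 - ηE) * t - (M ^ 2 + M * s) < 0 := by
      nlinarith
    have hA : (1 - ηE) * t - (M ^ 2 - M * s) = 0 := by
      rcases mul_eq_zero.mp hfac with h | h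
      · rcases mul_eq_zero.mp h with h | h
        · exact absurd h hB.ne'
        · exact h
      · linarith
    rw [htdef, eq_div_iff h1E.ne']
    linarith
end

section
/- Let M > 0 and η_E > 0 be real numbers, and define h : [0, M²] → ℝ by h(t) = t·(M² − t)/(M² − (1−η_E)·t). Then for every t ∈ [0, M²], h(t) ≤ M²/(1 + √η_E)², with equality if and only if t = M²/(1 + √η_E); in particular t★ = M²/(1+√η_E) lies in (0, M²) and is the unique maximizer of h on [0, M²]. -/
open Real

/-- Optimization underlying Proposition 1: on `[0, M²]`, the function
`h(t) = t(M²−t)/(M²−(1−η_E)t)` is maximized uniquely at `t★ = M²/(1+√η_E)`,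
with maximum value `M²/(1+√η_E)²`. -/
theorem stmt_16 (M ηE : ℝ) (hM : 0 < M) (hE : 0 < ηE) :
    let h : ℝ → ℝ := fun t => t * (M ^ 2 - t) / (M ^ 2 - (1 - ηE) * t)
    (∀ t ∈ Set.Icc (0 : ℝ) (M ^ 2), h t ≤ M ^ 2 / (1 + Real.sqrt ηE) ^ 2) ∧
      (∀ t ∈ Set.Icc (0 : ℝ) (M ^ 2),
        (h t = M ^ 2 / (1 + Real.sqrt ηE) ^ 2 ↔ t = M ^ 2 / (1 + Real.sqrt ηE))) ∧
      M ^ 2 / (1 + Real.sqrt ηE) ∈ Set.Ioo (0 : ℝ) (M ^ 2) := by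
  intro h
  have hs : 0 < Real.sqrt ηE := Real.sqrt_pos.2 hE
  set s := Real.sqrt ηE with hsdef
  have hs2 : s ^ 2 = ηE := Real.sq_sqrt hE.le
  have h1s : (0:ℝ) < 1 + s := by linarith
  have h1s' : (1:ℝ) + s ≠ 0 := ne_of_gt h1s
  have hM2 : 0 < M ^ 2 := by positivity
  have hD : ∀ t ∈ Set.Icc (0:ℝ) (M^2), 0 < M ^ 2 - (1 - ηE) * t := by
    intro t ht
    obtain ⟨ht0, ht1⟩ := ht
    rcases eq_or_lt_of_le ht0 with h0 | h0
    · nlinarith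
    · nlinarith [mul_pos hE h0]
  have key : ∀ t : ℝ, M ^ 2 / (1+s)^2 * (M ^ 2 - (1 - ηE) * t) - t * (M^2 - t)
      = (t - M^2/(1+s))^2 := by
    intro t
    rw [← hs2]
    field_simp
    ring
  refine ⟨?_, ?_, ?_⟩
  · intro t ht
    rw [show h t = t * (M ^ 2 - t) / (M ^ 2 - (1 - ηE) * t) from rfl,
      div_le_iff₀ (hD t ht)]
    nlinarith [key t, sq_nonneg (t - M^2/(1+s))]
  · intro t ht
    rw [show h t = t * (M ^ 2 - t) / (M ^ 2 - (1 - ηE) * t) from rfl,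
      div_eq_iff (ne_of_gt (hD t ht))]
    constructor
    · intro heq
      have : (t - M^2/(1+s))^2 = 0 := by nlinarith [key t]
      have := pow_eq_zero_iff (n := 2) (by norm_num) |>.mp this
      linarith
    · intro heq
      subst heq
      nlinarith [key (M^2/(1+s))]
  · constructor
    · positivity
    · rw [div_lt_iff₀ h1s]
      nlinarith
end
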